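/- arXiv:2007.08110 — 4 statements merged into one kernel-verified Lean document; each statement's English description precedes it below -/
import Mathlib

section
/- If f : ℝ → ℝ is quasi-concave (for all a ≤ b ≤ c, f(b) ≥ min{f(a), f(c)}), then for any ℓ > 0 the function g(x) = min{f(x), f(x+ℓ)} is also quasi-concave. -/
def IsQuasiconcave {α β : Type*} [Preorder α] [LinearOrder β] (f : α → β) : Prop :=
  ∀ a b c, a ≤ b → b ≤ c → min (f a) (f c) ≤ f b

namespace IsQuasiconcave

variable {α γ β : Type*} [Preorder α] [Preorder γ] [LinearOrder β] {f g : α → β}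

theorem comp_monotone (hf : IsQuasiconcave f) {h : γ → α} (hh : Monotone h) :
    IsQuasiconcave (f ∘ h) :=
  fun a b c hab hbc => hf (h a) (h b) (h c) (hh hab) (hh hbc)

protected theorem min (hf : IsQuasiconcave f) (hg : IsQuasiconcave g) :
    IsQuasiconcave fun x => min (f x) (g x) := by
  intro a b c hab hbc
  calc min (min (f a) (g a)) (min (f c) (g c))
      = min (min (f a) (f c)) (min (g a) (g c)) := min_min_min_comm _ _ _ _
    _ ≤ min (f b) (g b) := min_le_min (hf a b c hab hbc) (hg a b c hab hbc)

end IsQuasiconcave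

theorem stmt_5_general (f : ℝ → ℝ)
    (hf : ∀ a b c : ℝ, a ≤ b → b ≤ c → min (f a) (f c) ≤ f b)
    (ℓ : ℝ) :
    ∀ a b c : ℝ, a ≤ b → b ≤ c →
      min (min (f a) (f (a + ℓ))) (min (f c) (f (c + ℓ))) ≤ min (f b) (f (b + ℓ)) :=
  have hf : IsQuasiconcave f := hf
  hf.min (hf.comp_monotone (monotone_id.add_const ℓ))

theorem stmt_5 (f : ℝ → ℝ)
    (hf : ∀ a b c : ℝ, a ≤ b → b ≤ c → min (f a) (f c) ≤ f b)
    (ℓ : ℝ) (hℓ : 0 < ℓ) :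
    ∀ a b c : ℝ, a ≤ b → b ≤ c →
      min (min (f a) (f (a + ℓ))) (min (f c) (f (c + ℓ))) ≤ min (f b) (f (b + ℓ)) :=
  stmt_5_general f hf ℓ
end

section
/- Fix α > 0 and let P ⊆ ℝ^d be a finite set with diameter D and width w. If ζ ≤ min{αw/(√2·D), 1/2} and V is a ζ-angle cover of the unit sphere, then w ≤ min over v ∈ V of max over a,b ∈ P of ⟨b − a, v⟩ ≤ (1 + α)·w. -/
/-- The maximal projection-width of a finite point set `P` along a direction `u`:
`max_{a,b ∈ P} ⟪b - a, u⟫`. -/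
noncomputable def dirWidth {d : ℕ} (P : Finset (EuclideanSpace ℝ (Fin d)))
    (u : EuclideanSpace ℝ (Fin d)) : ℝ :=
  sSup {s : ℝ | ∃ a ∈ P, ∃ b ∈ P, s = (inner ℝ (b - a) u : ℝ)}

/-- The width of a finite point set: the minimum of `dirWidth` over all unit directions. -/
noncomputable def setWidth {d : ℕ} (P : Finset (EuclideanSpace ℝ (Fin d))) : ℝ :=
  sInf {r : ℝ | ∃ u : EuclideanSpace ℝ (Fin d), ‖u‖ = 1 ∧ r = dirWidth P u}

/-! Moving the direction from `u` to `v` changes each projection `⟪b - a, ·⟫` by at most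
`‖b - a‖ * ‖v - u‖ ≤ D * ‖v - u‖`, so the directional width is `D`-Lipschitz in the direction.
A cover member within angle `ζ` of a near-optimal unit direction is within chord distance `ζ` of
it, hence has directional width at most `w + D * ζ ≤ w + α * w`. The lower bound holds because
every member of the cover is itself a unit direction. -/

open InnerProductGeometry

theorem InnerProductGeometry.norm_sub_le_angle {V : Type*} [NormedAddCommGroup V]
    [InnerProductSpace ℝ V] {x y : V} (hx : ‖x‖ = 1) (hy : ‖y‖ = 1) : ‖x - y‖ ≤ angle x y := by
  have hcos := norm_sub_sq_eq_norm_sq_add_norm_sq_sub_two_mul_norm_mul_norm_mul_cos_angle x y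
  rw [hx, hy] at hcos
  have := Real.one_sub_sq_div_two_le_cos (x := angle x y)
  exact le_of_sq_le_sq (by nlinarith) (angle_nonneg x y)

section Width

variable {d : ℕ} {P : Finset (EuclideanSpace ℝ (Fin d))} {u v : EuclideanSpace ℝ (Fin d)}

lemma bddAbove_inner_sub (P : Finset (EuclideanSpace ℝ (Fin d))) (u : EuclideanSpace ℝ (Fin d)) :
    BddAbove {s : ℝ | ∃ a ∈ P, ∃ b ∈ P, s = inner ℝ (b - a) u} := by
  refine ((P.finite_toSet.image2 (fun a b => inner ℝ (b - a) u) P.finite_toSet).subset ?_).bddAbove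
  rintro s ⟨a, ha, b, hb, rfl⟩
  exact ⟨a, ha, b, hb, rfl⟩

lemma inner_sub_le_dirWidth {a b : EuclideanSpace ℝ (Fin d)} (ha : a ∈ P) (hb : b ∈ P)
    (u : EuclideanSpace ℝ (Fin d)) : inner ℝ (b - a) u ≤ dirWidth P u :=
  le_csSup (bddAbove_inner_sub P u) ⟨a, ha, b, hb, rfl⟩

lemma dirWidth_le {c : ℝ} (hP : P.Nonempty) (h : ∀ a ∈ P, ∀ b ∈ P, inner ℝ (b - a) u ≤ c) :
    dirWidth P u ≤ c := by
  obtain ⟨a, ha⟩ := hP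
  refine csSup_le ⟨_, a, ha, a, ha, rfl⟩ ?_
  rintro s ⟨a, ha, b, hb, rfl⟩
  exact h a ha b hb

lemma dirWidth_empty (u : EuclideanSpace ℝ (Fin d)) : dirWidth ∅ u = 0 := by
  simp [dirWidth]

lemma dirWidth_nonneg (P : Finset (EuclideanSpace ℝ (Fin d))) (u : EuclideanSpace ℝ (Fin d)) :
    0 ≤ dirWidth P u := by
  rcases P.eq_empty_or_nonempty with rfl | ⟨a, ha⟩
  · exact (dirWidth_empty u).ge
  · simpa using inner_sub_le_dirWidth ha ha u

lemma dirWidth_le_dirWidth_add_diam_mul :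
    dirWidth P v ≤ dirWidth P u + Metric.diam (P : Set (EuclideanSpace ℝ (Fin d))) * ‖v - u‖ := by
  rcases P.eq_empty_or_nonempty with rfl | hP
  · simp [dirWidth_empty]
  refine dirWidth_le hP fun a ha b hb => ?_
  have hdiam : ‖b - a‖ ≤ Metric.diam (P : Set (EuclideanSpace ℝ (Fin d))) := by
    simpa [dist_eq_norm] using Metric.dist_le_diam_of_mem P.finite_toSet.isBounded hb ha
  calc inner ℝ (b - a) v = inner ℝ (b - a) u + inner ℝ (b - a) (v - u) := by
        rw [inner_sub_right]; ring
    _ ≤ dirWidth P u + ‖b - a‖ * ‖v - u‖ :=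
        add_le_add (inner_sub_le_dirWidth ha hb u) (real_inner_le_norm _ _)
    _ ≤ dirWidth P u + Metric.diam (P : Set (EuclideanSpace ℝ (Fin d))) * ‖v - u‖ := by gcongr

lemma bddBelow_dirWidth (P : Finset (EuclideanSpace ℝ (Fin d)))
    (V : Set (EuclideanSpace ℝ (Fin d))) : BddBelow {r : ℝ | ∃ v ∈ V, r = dirWidth P v} :=
  ⟨0, by rintro r ⟨v, -, rfl⟩; exact dirWidth_nonneg P v⟩

lemma setWidth_nonneg (P : Finset (EuclideanSpace ℝ (Fin d))) : 0 ≤ setWidth P :=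
  Real.sInf_nonneg (by rintro r ⟨u, -, rfl⟩; exact dirWidth_nonneg P u)

lemma setWidth_le_dirWidth (hu : ‖u‖ = 1) : setWidth P ≤ dirWidth P u :=
  csInf_le ⟨0, by rintro r ⟨u, -, rfl⟩; exact dirWidth_nonneg P u⟩ ⟨u, hu, rfl⟩

lemma exists_dirWidth_lt_of_setWidth_lt {c : ℝ} (hw : 0 < setWidth P) (h : setWidth P < c) :
    ∃ u : EuclideanSpace ℝ (Fin d), ‖u‖ = 1 ∧ dirWidth P u < c := by
  have hne : {r : ℝ | ∃ u : EuclideanSpace ℝ (Fin d), ‖u‖ = 1 ∧ r = dirWidth P u}.Nonempty := by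
    by_contra hempty
    rw [Set.not_nonempty_iff_eq_empty] at hempty
    simp [setWidth, hempty] at hw
  obtain ⟨_, ⟨u, hu, rfl⟩, hlt⟩ := exists_lt_of_csInf_lt hne h
  exact ⟨u, hu, hlt⟩

lemma setWidth_le_sInf_dirWidth {V : Set (EuclideanSpace ℝ (Fin d))} (hV : ∀ v ∈ V, ‖v‖ = 1)
    (hVne : V.Nonempty) : setWidth P ≤ sInf {r : ℝ | ∃ v ∈ V, r = dirWidth P v} := by
  obtain ⟨v, hv⟩ := hVne
  refine le_csInf ⟨_, v, hv, rfl⟩ ?_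
  rintro r ⟨v, hv, rfl⟩
  exact setWidth_le_dirWidth (hV v hv)

lemma sInf_dirWidth_le_setWidth_add {V : Set (EuclideanSpace ℝ (Fin d))} {δ : ℝ}
    (hw : 0 < setWidth P) (hV : ∀ u : EuclideanSpace ℝ (Fin d), ‖u‖ = 1 → ∃ v ∈ V, ‖u - v‖ ≤ δ) :
    sInf {r : ℝ | ∃ v ∈ V, r = dirWidth P v} ≤
      setWidth P + Metric.diam (P : Set (EuclideanSpace ℝ (Fin d))) * δ := by
  refine le_of_forall_pos_le_add fun ε hε => ?_
  obtain ⟨u, hu, hlt⟩ := exists_dirWidth_lt_of_setWidth_lt hw (lt_add_of_pos_right _ hε)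
  obtain ⟨v, hv, huv⟩ := hV u hu
  calc sInf {r : ℝ | ∃ v ∈ V, r = dirWidth P v}
      ≤ dirWidth P v := csInf_le (bddBelow_dirWidth P V) ⟨v, hv, rfl⟩
    _ ≤ dirWidth P u + Metric.diam (P : Set (EuclideanSpace ℝ (Fin d))) * ‖v - u‖ :=
        dirWidth_le_dirWidth_add_diam_mul
    _ ≤ setWidth P + ε + Metric.diam (P : Set (EuclideanSpace ℝ (Fin d))) * δ := by
        rw [norm_sub_rev] at huv
        gcongr
    _ = setWidth P + Metric.diam (P : Set (EuclideanSpace ℝ (Fin d))) * δ + ε := by ring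

end Width

theorem stmt_9_general (d : ℕ) (α : ℝ)
    (P : Finset (EuclideanSpace ℝ (Fin d)))
    (D w : ℝ) (hD : D = Metric.diam (P : Set (EuclideanSpace ℝ (Fin d))))
    (hw : w = setWidth P)
    (ζ : ℝ) (hζ0 : 0 < ζ) (hζ : ζ ≤ min (α * w / (Real.sqrt 2 * D)) (1/2))
    (V : Set (EuclideanSpace ℝ (Fin d))) (hVunit : ∀ v ∈ V, ‖v‖ = 1)
    (hcover : ∀ u : EuclideanSpace ℝ (Fin d), ‖u‖ = 1 →
      ∃ v ∈ V, InnerProductGeometry.angle u v ≤ ζ) :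
    w ≤ sInf {r : ℝ | ∃ v ∈ V, r = dirWidth P v} ∧
      sInf {r : ℝ | ∃ v ∈ V, r = dirWidth P v} ≤ (1 + α) * w := by
  have hζα : ζ ≤ α * w / (Real.sqrt 2 * D) := hζ.trans (min_le_left _ _)
  have hpos : 0 < α * w / (Real.sqrt 2 * D) := hζ0.trans_le hζα
  -- `x / 0 = 0` in Lean, so `0 < ζ ≤ α * w / (√2 * D)` already rules out `D = 0`
  have hD0 : 0 < D := (hD ▸ Metric.diam_nonneg).lt_of_ne (by rintro rfl; simp at hpos)
  have hαw : 0 < α * w := (div_pos_iff_of_pos_right (by positivity)).1 hpos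
  have hw0 : 0 < w := (hw ▸ setWidth_nonneg P).lt_of_ne (by rintro rfl; simp at hαw)
  have hDζ : D * ζ ≤ α * w := by
    have := (le_div_iff₀ (by positivity)).1 hζα
    nlinarith [Real.one_lt_sqrt_two]
  have hchord : ∀ u : EuclideanSpace ℝ (Fin d), ‖u‖ = 1 → ∃ v ∈ V, ‖u - v‖ ≤ ζ := fun u hu =>
    let ⟨v, hv, hang⟩ := hcover u hu
    ⟨v, hv, (norm_sub_le_angle hu (hVunit v hv)).trans hang⟩
  subst hD hw
  obtain ⟨u, hu, -⟩ := exists_dirWidth_lt_of_setWidth_lt hw0 (lt_add_one _)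
  obtain ⟨v, hv, -⟩ := hcover u hu
  refine ⟨setWidth_le_sInf_dirWidth hVunit ⟨v, hv⟩, ?_⟩
  calc _ ≤ setWidth P + Metric.diam (P : Set (EuclideanSpace ℝ (Fin d))) * ζ :=
        sInf_dirWidth_le_setWidth_add hw0 hchord
    _ ≤ (1 + α) * setWidth P := by linarith

theorem stmt_9 (d : ℕ) (hd : 1 ≤ d) (α : ℝ) (hα : 0 < α)
    (P : Finset (EuclideanSpace ℝ (Fin d))) (hP : P.Nonempty)
    (D w : ℝ) (hD : D = Metric.diam (P : Set (EuclideanSpace ℝ (Fin d))))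
    (hw : w = setWidth P)
    (ζ : ℝ) (hζ0 : 0 < ζ) (hζ : ζ ≤ min (α * w / (Real.sqrt 2 * D)) (1/2))
    (V : Set (EuclideanSpace ℝ (Fin d))) (hVunit : ∀ v ∈ V, ‖v‖ = 1)
    (hcover : ∀ u : EuclideanSpace ℝ (Fin d), ‖u‖ = 1 →
      ∃ v ∈ V, InnerProductGeometry.angle u v ≤ ζ) :
    w ≤ sInf {r : ℝ | ∃ v ∈ V, r = dirWidth P v} ∧
      sInf {r : ℝ | ∃ v ∈ V, r = dirWidth P v} ≤ (1 + α) * w :=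
  stmt_9_general d α P D w hD hw ζ hζ0 hζ V hVunit hcover
end

section
/- Let S be a convex body in ℝ^d satisfying: for every unit direction u, max_{p∈conv(S)}⟨p,u⟩ ≤ max_{p∈D}⟨p,u⟩ + α·width(D), where D is a convex body containing a ball of radius width(D)·√(d+2)/(2(d+1)) centered at some point p₂. Then conv(S) − p₂ ⊆ (1 + 2α√(d+1/2))·(D − p₂). -/
/-!
Each facet constraint `⟪x - p₂, vᵢ⟫ ≤ λᵢ` of `D` is violated by points of `S` by at most `α·w`,
and the inradius bound `λᵢ ≥ w·√(d+2)/(2d+2)` together with `√(d+1/2)·√(d+2) ≥ d+1` turns that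
additive slack into the multiplicative slack `2α√(d+1/2)·λᵢ`. Hence every `x ∈ S` satisfies the
constraints of the dilate `p₂ + (1 + 2α√(d+1/2))·(D - p₂)`.
-/

open RealInnerProductSpace

lemma add_one_le_sqrt_mul_sqrt {t : ℝ} (ht : 0 ≤ t) :
    t + 1 ≤ Real.sqrt (t + 1/2) * Real.sqrt (t + 2) := by
  rw [← Real.sqrt_mul (by linarith), ← Real.sqrt_sq (by linarith : 0 ≤ t + 1)]
  exact Real.sqrt_le_sqrt (by nlinarith)

lemma mul_le_mul_sqrt_of_inradius_le {t α w l : ℝ} (ht : 0 ≤ t) (hα : 0 ≤ α) (hw : 0 ≤ w)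
    (hl : w * Real.sqrt (t + 2) / (2 * t + 2) ≤ l) :
    α * w ≤ 2 * α * Real.sqrt (t + 1/2) * l := by
  have ht1 : 0 < t + 1 := by linarith
  calc α * w ≤ α * w * (Real.sqrt (t + 1/2) * Real.sqrt (t + 2) / (t + 1)) := by
        refine le_mul_of_one_le_right (by positivity) ?_
        rw [one_le_div ht1]
        exact add_one_le_sqrt_mul_sqrt ht
    _ = 2 * α * Real.sqrt (t + 1/2) * (w * Real.sqrt (t + 2) / (2 * t + 2)) := by
        field_simp
    _ ≤ 2 * α * Real.sqrt (t + 1/2) * l := by gcongr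

lemma exists_mem_iInter_halfspaces_eq_smul {E ι : Type*} [NormedAddCommGroup E]
    [InnerProductSpace ℝ E] {v : ι → E} {lam : ι → ℝ} {p x : E} {β : ℝ} (hβ : 0 < β)
    (hx : ∀ i, ⟪x - p, v i⟫ ≤ β * lam i) :
    ∃ y ∈ ⋂ i, {y : E | ⟪y - p, v i⟫ ≤ lam i}, x - p = β • (y - p) := by
  refine ⟨p + β⁻¹ • (x - p), Set.mem_iInter.2 fun i => ?_, ?_⟩
  · rw [Set.mem_ofPred_eq, add_sub_cancel_left, real_inner_smul_left, inv_mul_le_iff₀ hβ]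
    exact hx i
  · rw [add_sub_cancel_left, smul_inv_smul₀ hβ.ne']

theorem stmt_12_general (d : ℕ) (α w : ℝ) (hα : 0 ≤ α) (hw : 0 ≤ w)
    (ι : Type) (v : ι → EuclideanSpace ℝ (Fin d)) (lam : ι → ℝ)
    (hv : ∀ i, ‖v i‖ = 1)
    (p₂ : EuclideanSpace ℝ (Fin d))
    (D : Set (EuclideanSpace ℝ (Fin d)))
    (hD : D = ⋂ i, {x : EuclideanSpace ℝ (Fin d) | (inner ℝ (x - p₂) (v i) : ℝ) ≤ lam i})
    -- each `lam i` is at least `width(D)·√(d+2)/(2(d+1))`, as follows from `D` containing a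
    -- ball of that radius centered at `p₂`, where `w` denotes `width(D)`
    (hlam : ∀ i, w * Real.sqrt (d + 2) / (2 * d + 2) ≤ lam i)
    (S : Set (EuclideanSpace ℝ (Fin d)))
    -- for every unit direction `u`, `max_{p ∈ conv(S)} ⟪p,u⟫ ≤ max_{p ∈ D} ⟪p,u⟫ + α·width(D)`
    (hdir : ∀ u : EuclideanSpace ℝ (Fin d), ‖u‖ = 1 →
      ∃ q ∈ D, ∀ p ∈ S, (inner ℝ p u : ℝ) ≤ (inner ℝ q u : ℝ) + α * w) :
    ∀ x ∈ S, ∃ y ∈ D, x - p₂ = (1 + 2 * α * Real.sqrt (d + 1/2)) • (y - p₂) := by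
  intro x hx
  subst hD
  refine exists_mem_iInter_halfspaces_eq_smul (by positivity) fun i => ?_
  obtain ⟨q, hq, hsupp⟩ := hdir (v i) (hv i)
  have hqi : ⟪q - p₂, v i⟫ ≤ lam i := Set.mem_iInter.1 hq i
  have hxi : ⟪x - p₂, v i⟫ ≤ lam i + α * w := by
    have := hsupp x hx
    rw [inner_sub_left] at hqi ⊢
    linarith
  have hslack := mul_le_mul_sqrt_of_inradius_le (Nat.cast_nonneg d) hα hw (hlam i)
  linarith

theorem stmt_12 (d : ℕ) (α w : ℝ) (hα : 0 ≤ α) (hw : 0 ≤ w)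
    (ι : Type) [Fintype ι] (v : ι → EuclideanSpace ℝ (Fin d)) (lam : ι → ℝ)
    (hv : ∀ i, ‖v i‖ = 1)
    (p₂ : EuclideanSpace ℝ (Fin d))
    (D : Set (EuclideanSpace ℝ (Fin d)))
    (hD : D = ⋂ i, {x : EuclideanSpace ℝ (Fin d) | (inner ℝ (x - p₂) (v i) : ℝ) ≤ lam i})
    -- each `lam i` is at least `width(D)·√(d+2)/(2(d+1))`, as follows from `D` containing a
    -- ball of that radius centered at `p₂`, where `w` denotes `width(D)`
    (hlam : ∀ i, w * Real.sqrt (d + 2) / (2 * d + 2) ≤ lam i)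
    (S : Set (EuclideanSpace ℝ (Fin d)))
    (hSconv : Convex ℝ S) (hScomp : IsCompact S) (hSint : (interior S).Nonempty)
    -- for every unit direction `u`, `max_{p ∈ conv(S)} ⟪p,u⟫ ≤ max_{p ∈ D} ⟪p,u⟫ + α·width(D)`
    (hdir : ∀ u : EuclideanSpace ℝ (Fin d), ‖u‖ = 1 →
      ∃ q ∈ D, ∀ p ∈ S, (inner ℝ p u : ℝ) ≤ (inner ℝ q u : ℝ) + α * w) :
    ∀ x ∈ S, ∃ y ∈ D, x - p₂ = (1 + 2 * α * Real.sqrt (d + 1/2)) • (y - p₂) :=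
  stmt_12_general d α w hα hw ι v lam hv p₂ D hD hlam S hdir
end

section
/- Let 0 < ε < 1 and let X be the discrete Laplace random variable on ℤ with ℙ[X = i] ∝ exp(−(ε/8)|i|). Then for any integer i and any set I of 1 + ⌈8/ε⌉ consecutive integers with i as an endpoint, ℙ[X = i] / ℙ[X ∈ I] ≤ 3ε/8. -/
/-!
Write `w j = exp (-a |j|)` with `a = ε / 8`. Moving away from the endpoint `i` costs at most a
factor `exp (-a)` per step, so the window mass is at least `w i` times a geometric sum of
`k + 1 ≥ 1 / a` terms of ratio `exp (-a)`, which is at least `(1 - e⁻¹) / a ≥ 1 / (2a)`.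
The window to the left of `i` is the reflection of the window to the right of `-i`.
-/

open Finset Real

lemma one_sub_exp_neg_one_div_le_geom_sum {a : ℝ} (ha : 0 < a) {n : ℕ} (hn : 1 ≤ a * n) :
    (1 - exp (-1)) / a ≤ ∑ t ∈ range n, exp (-a) ^ t := by
  have hr : exp (-a) < 1 := exp_lt_one_iff.mpr (by linarith)
  have hpow : exp (-a) ^ n ≤ exp (-1) := by
    rw [← exp_nat_mul, exp_le_exp]
    linarith
  have hstep : 1 - exp (-a) ≤ a := by linarith [add_one_le_exp (-a)]
  rw [geom_sum_eq hr.ne, ← neg_div_neg_eq (_ ^ n - 1), neg_sub, neg_sub]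
  exact div_le_div₀ (by linarith [exp_neg_one_lt_half]) (by linarith) (by linarith) hstep

lemma exp_neg_mul_abs_mul_pow_le {a : ℝ} (ha : 0 ≤ a) (x : ℝ) (t : ℕ) :
    exp (-a * |x|) * exp (-a) ^ t ≤ exp (-a * |x + t|) := by
  rw [← exp_nat_mul, ← exp_add, exp_le_exp]
  have h := abs_add_le x t
  rw [Nat.abs_cast] at h
  nlinarith

lemma exp_neg_mul_abs_mul_le_sum_Icc {a : ℝ} (ha : 0 < a) (i k : ℤ) (hk : 1 ≤ a * (k + 1)) :
    exp (-a * |(i : ℝ)|) * ((1 - exp (-1)) / a) ≤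
      ∑ j ∈ Icc i (i + k), exp (-a * |(j : ℝ)|) := by
  have hk0 : (0 : ℝ) < k + 1 := pos_of_mul_pos_right (by linarith) ha.le
  replace hk0 : 0 < k + 1 := by exact_mod_cast hk0
  rw [Int.Icc_eq_finset_map, sum_map]
  have hn : (((i + k + 1 - i).toNat : ℕ) : ℝ) = k + 1 := by
    have : (((i + k + 1 - i).toNat : ℕ) : ℤ) = k + 1 := by omega
    exact_mod_cast this
  calc exp (-a * |(i : ℝ)|) * ((1 - exp (-1)) / a)
      ≤ exp (-a * |(i : ℝ)|) * ∑ t ∈ range (i + k + 1 - i).toNat, exp (-a) ^ t :=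
        mul_le_mul_of_nonneg_left (one_sub_exp_neg_one_div_le_geom_sum ha (hn ▸ hk)) (exp_pos _).le
    _ = ∑ t ∈ range (i + k + 1 - i).toNat, exp (-a * |(i : ℝ)|) * exp (-a) ^ t := mul_sum _ _ _
    _ ≤ _ := sum_le_sum fun t _ => by
        simpa using exp_neg_mul_abs_mul_pow_le ha.le (i : ℝ) t

lemma exp_neg_mul_abs_div_sum_Icc_le {a : ℝ} (ha : 0 < a) (i k : ℤ) (hk : 1 ≤ a * (k + 1)) :
    exp (-a * |(i : ℝ)|) / ∑ j ∈ Icc i (i + k), exp (-a * |(j : ℝ)|) ≤ 2 * a := by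
  have hfactor : 1 / (2 * a) ≤ (1 - exp (-1)) / a := by
    rw [div_le_div_iff₀ (by positivity) ha]
    nlinarith [exp_neg_one_lt_half]
  have hmass : exp (-a * |(i : ℝ)|) / (2 * a) ≤ ∑ j ∈ Icc i (i + k), exp (-a * |(j : ℝ)|) :=
    calc exp (-a * |(i : ℝ)|) / (2 * a) = exp (-a * |(i : ℝ)|) * (1 / (2 * a)) := by ring
      _ ≤ exp (-a * |(i : ℝ)|) * ((1 - exp (-1)) / a) := by gcongr
      _ ≤ _ := exp_neg_mul_abs_mul_le_sum_Icc ha i k hk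
  rw [div_le_iff₀ ((by positivity : 0 < exp (-a * |(i : ℝ)|) / (2 * a)).trans_le hmass)]
  rw [div_le_iff₀ (by positivity)] at hmass
  linarith

lemma sum_Icc_sub_eq_sum_Icc_neg_add {M : Type*} [AddCommMonoid M] {f : ℤ → M}
    (hf : Function.Even f) (i k : ℤ) :
    ∑ j ∈ Icc (i - k) i, f j = ∑ j ∈ Icc (-i) (-i + k), f j :=
  sum_nbij' Neg.neg Neg.neg (fun j hj => by simp only [mem_Icc] at hj ⊢; omega)
    (fun j hj => by simp only [mem_Icc] at hj ⊢; omega) (fun j _ => neg_neg j)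
    (fun j _ => neg_neg j) (fun j _ => (hf j).symm)

lemma exp_neg_mul_abs_div_sum_Icc_sub_le {a : ℝ} (ha : 0 < a) (i k : ℤ) (hk : 1 ≤ a * (k + 1)) :
    exp (-a * |(i : ℝ)|) / ∑ j ∈ Icc (i - k) i, exp (-a * |(j : ℝ)|) ≤ 2 * a := by
  have heven : Function.Even fun j : ℤ => exp (-a * |(j : ℝ)|) := fun j => by
    simp only [Int.cast_neg, abs_neg]
  have hi : |(i : ℝ)| = |((-i : ℤ) : ℝ)| := by simp only [Int.cast_neg, abs_neg]
  rw [sum_Icc_sub_eq_sum_Icc_neg_add heven, hi]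
  exact exp_neg_mul_abs_div_sum_Icc_le ha (-i) k hk

theorem stmt_18_general (ε : ℝ) (hε0 : 0 < ε) (i : ℤ) :
    Real.exp (-(ε / 8) * |(i : ℝ)|) /
        (∑ j ∈ Finset.Icc i (i + ⌈(8 : ℝ) / ε⌉), Real.exp (-(ε / 8) * |(j : ℝ)|)) ≤
      3 * ε / 8 ∧
    Real.exp (-(ε / 8) * |(i : ℝ)|) /
        (∑ j ∈ Finset.Icc (i - ⌈(8 : ℝ) / ε⌉) i, Real.exp (-(ε / 8) * |(j : ℝ)|)) ≤
      3 * ε / 8 := by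
  have ha : 0 < ε / 8 := by positivity
  have hk : 1 ≤ ε / 8 * ((⌈(8 : ℝ) / ε⌉ : ℝ) + 1) :=
    calc 1 = ε / 8 * (8 / ε) := by field_simp
      _ ≤ ε / 8 * ((⌈(8 : ℝ) / ε⌉ : ℝ) + 1) := by gcongr; linarith [Int.le_ceil ((8 : ℝ) / ε)]
  have hconst : 2 * (ε / 8) ≤ 3 * ε / 8 := by linarith
  exact ⟨(exp_neg_mul_abs_div_sum_Icc_le ha i _ hk).trans hconst,
    (exp_neg_mul_abs_div_sum_Icc_sub_le ha i _ hk).trans hconst⟩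

theorem stmt_18 (ε : ℝ) (hε0 : 0 < ε) (hε1 : ε < 1) (i : ℤ) :
    Real.exp (-(ε / 8) * |(i : ℝ)|) /
        (∑ j ∈ Finset.Icc i (i + ⌈(8 : ℝ) / ε⌉), Real.exp (-(ε / 8) * |(j : ℝ)|)) ≤
      3 * ε / 8 ∧
    Real.exp (-(ε / 8) * |(i : ℝ)|) /
        (∑ j ∈ Finset.Icc (i - ⌈(8 : ℝ) / ε⌉) i, Real.exp (-(ε / 8) * |(j : ℝ)|)) ≤
      3 * ε / 8 :=
  stmt_18_general ε hε0 i
end
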